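/- arXiv:2309.01359 — 3 statements merged into one kernel-verified Lean document; each statement's English description precedes it below -/
import Mathlib

section
/- The union of the classes I(c,d) over all c > a and d < b equals the class I_o(a,b). -/
lemma aux_rpow_le_max {p q x e : ℝ} (hp : 0 < p) (hpx : p ≤ x) (hxq : x ≤ q) :
    x ^ e ≤ max (p ^ e) (q ^ e) := by
  rcases le_or_gt 0 e with he | he
  · exact le_max_of_le_right (Real.rpow_le_rpow (hp.trans_le hpx).le hxq he)
  · exact le_max_of_le_left (Real.rpow_le_rpow_of_nonpos hp hpx he.le)

lemma aux_min_le_rpow {p q x e : ℝ} (hp : 0 < p) (hpx : p ≤ x) (hxq : x ≤ q) :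
    min (p ^ e) (q ^ e) ≤ x ^ e := by
  rcases le_or_gt 0 e with he | he
  · exact min_le_of_left_le (Real.rpow_le_rpow hp.le hpx he)
  · exact min_le_of_right_le (Real.rpow_le_rpow_of_nonpos (hp.trans_le hpx) hxq he.le)

lemma aux_ratio_split (x y z : ℝ) (hy : y ≠ 0) : x / z = x / y * (y / z) := by
  field_simp

lemma aux_glob_bound {a b δ R : ℝ} {φ : ℝ → ℝ}
    (hpos : ∀ t : ℝ, 0 < t → 0 < φ t)
    (hδ0 : 0 < δ)
    (hs : ∀ l t : ℝ, 0 < l → l ≤ δ → 0 < t → φ (l * t) / φ t ≤ l ^ a)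
    (hR : 1 ≤ R)
    (hl : ∀ l t : ℝ, R ≤ l → 0 < t → φ (l * t) / φ t ≤ l ^ b)
    (p q : ℝ) (hp : 0 < p) :
    ∃ M : ℝ, 0 < M ∧ ∀ l t : ℝ, p ≤ l → l ≤ q → 0 < t → φ (l * t) / φ t ≤ M := by
  have hR0 : (0:ℝ) < R := lt_of_lt_of_le one_pos hR
  set m : ℝ := min δ (p / R) with hm
  have hm0 : 0 < m := lt_min hδ0 (div_pos hp hR0)
  refine ⟨max (m ^ a) (δ ^ a) * max ((1:ℝ) ^ b) ((q / m) ^ b), ?_, ?_⟩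
  · apply mul_pos
    · exact lt_of_lt_of_le (Real.rpow_pos_of_pos hδ0 a) (le_max_right _ _)
    · exact lt_of_lt_of_le (by rw [Real.one_rpow]; exact one_pos) (le_max_left _ _)
  · intro l t hpl hlq ht
    have hl0 : 0 < l := hp.trans_le hpl
    set μ : ℝ := min δ (l / R) with hμ
    have hμ0 : 0 < μ := lt_min hδ0 (div_pos hl0 hR0)
    have hμδ : μ ≤ δ := min_le_left _ _
    have hμl : μ ≤ l / R := min_le_right _ _
    have hRlμ : R ≤ l / μ := by
      rw [le_div_iff₀ hμ0]
      calc R * μ ≤ R * (l / R) := by nlinarith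
        _ = l := by field_simp
    have hlμ0 : 0 < l / μ := div_pos hl0 hμ0
    have hsplit : φ (l * t) / φ t
        = φ (μ * (l / μ * t)) / φ (l / μ * t) * (φ (l / μ * t) / φ t) := by
      rw [aux_ratio_split (φ (l * t)) (φ (l / μ * t)) (φ t)
        (ne_of_gt (hpos _ (mul_pos hlμ0 ht)))]
      congr 2
      field_simp
    have h1 : φ (μ * (l / μ * t)) / φ (l / μ * t) ≤ μ ^ a :=
      hs μ _ hμ0 hμδ (mul_pos hlμ0 ht)
    have h2 : φ (l / μ * t) / φ t ≤ (l / μ) ^ b := hl _ t hRlμ ht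
    have hmμ : m ≤ μ := min_le_min le_rfl (by gcongr)
    have hb1 : μ ^ a ≤ max (m ^ a) (δ ^ a) := aux_rpow_le_max hm0 hmμ hμδ
    have hb2 : (l / μ) ^ b ≤ max ((1:ℝ) ^ b) ((q / m) ^ b) := by
      apply aux_rpow_le_max one_pos (le_trans hR hRlμ)
      exact div_le_div₀ (le_trans hl0.le hlq) hlq hm0 hmμ
    calc φ (l * t) / φ t
        = φ (μ * (l / μ * t)) / φ (l / μ * t) * (φ (l / μ * t) / φ t) := hsplit
      _ ≤ μ ^ a * (l / μ) ^ b := by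
          apply mul_le_mul h1 h2 (div_nonneg (hpos _ (mul_pos hlμ0 ht)).le (hpos t ht).le)
            (Real.rpow_nonneg hμ0.le a)
      _ ≤ max (m ^ a) (δ ^ a) * max ((1:ℝ) ^ b) ((q / m) ^ b) := by
          apply mul_le_mul hb1 hb2 (Real.rpow_nonneg hlμ0.le b)
            (le_trans (Real.rpow_nonneg hμ0.le a) hb1)

lemma aux_small_side {a δ M : ℝ} {φ : ℝ → ℝ}
    (hpos : ∀ t : ℝ, 0 < t → 0 < φ t)
    (hδ0 : 0 < δ) (hδ1 : δ < 1)
    (hs : ∀ l t : ℝ, 0 < l → l ≤ δ → 0 < t → φ (l * t) / φ t ≤ (1/2) * l ^ a)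
    (hM0 : 0 < M)
    (hM : ∀ l t : ℝ, δ ≤ l → l ≤ 1 → 0 < t → φ (l * t) / φ t ≤ M) :
    ∃ c : ℝ, a < c ∧ ∃ C : ℝ, 0 < C ∧
      ∀ l t : ℝ, 0 < l → l ≤ 1 → 0 < t → φ (l * t) / φ t ≤ C * l ^ c := by
  have hlogδ : Real.log δ < 0 := Real.log_neg hδ0 hδ1
  have hlog2 : Real.log (1/2 : ℝ) < 0 := Real.log_neg (by norm_num) (by norm_num)
  set θ : ℝ := Real.log (1/2 : ℝ) / Real.log δ with hθ
  have hθ0 : 0 < θ := div_pos_of_neg_of_neg hlog2 hlogδ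
  have hδθ : δ ^ θ = 1/2 := by
    rw [Real.rpow_def_of_pos hδ0, hθ, mul_comm, div_mul_cancel₀ _ (ne_of_lt hlogδ),
      Real.exp_log (by norm_num)]
  set c : ℝ := a + θ with hc
  have hac : a < c := lt_add_of_pos_right a hθ0
  have hδc : δ ^ c = δ ^ a * (1/2) := by
    rw [hc, Real.rpow_add hδ0, hδθ]
  -- iteration
  have key : ∀ n : ℕ, ∀ t : ℝ, 0 < t → φ (δ ^ n * t) / φ t ≤ ((δ ^ n : ℝ)) ^ c := by
    intro n
    induction n with
    | zero =>
      intro t ht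
      simp [div_self (ne_of_gt (hpos t ht)), Real.one_rpow]
    | succ n ih =>
      intro t ht
      have hpn : (0:ℝ) < δ ^ n := pow_pos hδ0 n
      have hpt : 0 < δ ^ n * t := mul_pos hpn ht
      have hsplit : φ (δ ^ (n+1) * t) / φ t
          = φ (δ * (δ ^ n * t)) / φ (δ ^ n * t) * (φ (δ ^ n * t) / φ t) := by
        rw [aux_ratio_split _ (φ (δ ^ n * t)) _ (ne_of_gt (hpos _ hpt))]
        congr 3
        ring
      rw [hsplit]
      calc φ (δ * (δ ^ n * t)) / φ (δ ^ n * t) * (φ (δ ^ n * t) / φ t)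
          ≤ ((1/2) * δ ^ a) * ((δ ^ n : ℝ) ^ c) := by
            apply mul_le_mul (hs δ _ hδ0 le_rfl hpt) (ih t ht)
              (div_nonneg (hpos _ hpt).le (hpos t ht).le)
            positivity
        _ = δ ^ c * (δ ^ n : ℝ) ^ c := by rw [hδc]; ring
        _ = ((δ ^ (n+1) : ℝ)) ^ c := by
            rw [← Real.mul_rpow hδ0.le (pow_nonneg hδ0.le n), ← pow_succ']
  set C₂ : ℝ := M * max 1 (δ ^ (-c)) with hC₂
  set m0 : ℝ := min (δ ^ c) ((1:ℝ) ^ c) with hm0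
  have hm00 : 0 < m0 := lt_min (Real.rpow_pos_of_pos hδ0 c)
    (Real.rpow_pos_of_pos one_pos c)
  set C₁ : ℝ := M / m0 with hC₁
  have hC₁0 : 0 < C₁ := div_pos hM0 hm00
  have hC₂0 : 0 < C₂ := mul_pos hM0 (lt_of_lt_of_le one_pos (le_max_left _ _))
  refine ⟨c, hac, C₁ + C₂, by positivity, ?_⟩
  intro l t hl0 hl1 ht
  have hlc0 : 0 < l ^ c := Real.rpow_pos_of_pos hl0 c
  rcases le_or_gt l δ with hlδ | hδl
  · -- small l
    have hex : ∃ k : ℕ, δ ^ (k+1) < l := by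
      obtain ⟨k, hk⟩ := exists_pow_lt_of_lt_one hl0 hδ1
      exact ⟨k, lt_of_le_of_lt (pow_le_pow_of_le_one hδ0.le hδ1.le (Nat.le_succ k)) hk⟩
    set n : ℕ := Nat.find hex with hn
    have hn1 : δ ^ (n+1) < l := Nat.find_spec hex
    have hn2 : l ≤ δ ^ n := by
      rcases Nat.eq_zero_or_pos n with h0 | h0
      · rw [h0, pow_zero]; exact hl1
      · have hlt : n - 1 < n := Nat.sub_lt h0 one_pos
        have h := Nat.find_min hex hlt
        rw [Nat.sub_add_cancel h0] at h
        exact not_lt.mp h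
      -- note: may need adjusting since n := Nat.find hex
    have hpn : (0:ℝ) < δ ^ n := pow_pos hδ0 n
    set s : ℝ := l / δ ^ n with hsdef
    have hs0 : 0 < s := div_pos hl0 hpn
    have hs1 : δ < s := by
      rw [hsdef, lt_div_iff₀ hpn]
      calc δ * δ ^ n = δ ^ (n+1) := (pow_succ' δ n).symm
        _ < l := hn1
    have hs2 : s ≤ 1 := (div_le_one hpn).mpr hn2
    have hst : 0 < s * t := mul_pos hs0 ht
    have hsplit : φ (l * t) / φ t
        = φ (δ ^ n * (s * t)) / φ (s * t) * (φ (s * t) / φ t) := by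
      rw [aux_ratio_split _ (φ (s * t)) _ (ne_of_gt (hpos _ hst))]
      congr 3
      rw [hsdef]; field_simp
    have hkey : φ (δ ^ n * (s * t)) / φ (s * t) ≤ ((δ ^ n : ℝ)) ^ c := key n _ hst
    have hMn : φ (s * t) / φ t ≤ M := hM s t hs1.le hs2 ht
    have hdn : ((δ ^ n : ℝ)) ^ c ≤ max 1 (δ ^ (-c)) * l ^ c := by
      rcases le_or_gt 0 c with hcs | hcs
      · have h : (δ:ℝ) ^ n ≤ l / δ := by
          rw [le_div_iff₀ hδ0]
          calc (δ:ℝ) ^ n * δ = δ ^ (n+1) := (pow_succ δ n).symm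
            _ ≤ l := hn1.le
        calc ((δ ^ n : ℝ)) ^ c ≤ (l / δ) ^ c := Real.rpow_le_rpow hpn.le h hcs
          _ = δ ^ (-c) * l ^ c := by
              rw [Real.div_rpow hl0.le hδ0.le, Real.rpow_neg hδ0.le]
              ring
          _ ≤ max 1 (δ ^ (-c)) * l ^ c := by
              apply mul_le_mul_of_nonneg_right (le_max_right _ _) hlc0.le
      · have h : ((δ ^ n : ℝ)) ^ c ≤ l ^ c :=
          Real.rpow_le_rpow_of_nonpos hl0 hn2 hcs.le
        calc ((δ ^ n : ℝ)) ^ c ≤ l ^ c := h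
          _ ≤ max 1 (δ ^ (-c)) * l ^ c :=
              le_mul_of_one_le_left hlc0.le (le_max_left _ _)
    calc φ (l * t) / φ t
        = φ (δ ^ n * (s * t)) / φ (s * t) * (φ (s * t) / φ t) := hsplit
      _ ≤ ((δ ^ n : ℝ)) ^ c * M := by
          apply mul_le_mul hkey hMn (div_nonneg (hpos _ hst).le (hpos t ht).le)
          positivity
      _ ≤ (max 1 (δ ^ (-c)) * l ^ c) * M :=
          mul_le_mul_of_nonneg_right hdn hM0.le
      _ = C₂ * l ^ c := by rw [hC₂]; ring
      _ ≤ (C₁ + C₂) * l ^ c := by nlinarith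
  · -- l ∈ (δ, 1]
    have h1 : φ (l * t) / φ t ≤ M := hM l t hδl.le hl1 ht
    have h2 : m0 ≤ l ^ c := aux_min_le_rpow hδ0 hδl.le hl1
    calc φ (l * t) / φ t ≤ M := h1
      _ = C₁ * m0 := by rw [hC₁, div_mul_cancel₀ _ (ne_of_gt hm00)]
      _ ≤ C₁ * l ^ c := mul_le_mul_of_nonneg_left h2 hC₁0.le
      _ ≤ (C₁ + C₂) * l ^ c := by nlinarith

lemma aux_large_side {b R M : ℝ} {φ : ℝ → ℝ}
    (hpos : ∀ t : ℝ, 0 < t → 0 < φ t)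
    (hR2 : 2 ≤ R)
    (hl : ∀ l t : ℝ, R ≤ l → 0 < t → φ (l * t) / φ t ≤ (1/2) * l ^ b)
    (hM0 : 0 < M)
    (hM : ∀ l t : ℝ, 1 ≤ l → l ≤ R → 0 < t → φ (l * t) / φ t ≤ M) :
    ∃ d : ℝ, d < b ∧ ∃ C : ℝ, 0 < C ∧
      ∀ l t : ℝ, 1 ≤ l → 0 < t → φ (l * t) / φ t ≤ C * l ^ d := by
  have hR1 : (1:ℝ) < R := lt_of_lt_of_le one_lt_two hR2
  have hR0 : (0:ℝ) < R := lt_trans one_pos hR1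
  have hlogR : 0 < Real.log R := Real.log_pos hR1
  set θ : ℝ := Real.log 2 / Real.log R with hθ
  have hθ0 : 0 < θ := div_pos (Real.log_pos one_lt_two) hlogR
  have hRθ : R ^ θ = 2 := by
    rw [Real.rpow_def_of_pos hR0, hθ, mul_comm, div_mul_cancel₀ _ (ne_of_gt hlogR),
      Real.exp_log (by norm_num)]
  set d : ℝ := b - θ with hd
  have hdb : d < b := sub_lt_self b hθ0
  have hRd : R ^ d = R ^ b * (1/2) := by
    rw [hd, sub_eq_add_neg, Real.rpow_add hR0, Real.rpow_neg hR0.le, hRθ]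
    norm_num
  have key : ∀ n : ℕ, ∀ t : ℝ, 0 < t → φ (R ^ n * t) / φ t ≤ ((R ^ n : ℝ)) ^ d := by
    intro n
    induction n with
    | zero =>
      intro t ht
      simp [div_self (ne_of_gt (hpos t ht)), Real.one_rpow]
    | succ n ih =>
      intro t ht
      have hpn : (0:ℝ) < R ^ n := pow_pos hR0 n
      have hpt : 0 < R ^ n * t := mul_pos hpn ht
      have hsplit : φ (R ^ (n+1) * t) / φ t
          = φ (R * (R ^ n * t)) / φ (R ^ n * t) * (φ (R ^ n * t) / φ t) := by
        rw [aux_ratio_split _ (φ (R ^ n * t)) _ (ne_of_gt (hpos _ hpt))]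
        congr 3
        ring
      rw [hsplit]
      calc φ (R * (R ^ n * t)) / φ (R ^ n * t) * (φ (R ^ n * t) / φ t)
          ≤ ((1/2) * R ^ b) * ((R ^ n : ℝ) ^ d) := by
            apply mul_le_mul (hl R _ le_rfl hpt) (ih t ht)
              (div_nonneg (hpos _ hpt).le (hpos t ht).le)
            positivity
        _ = R ^ d * (R ^ n : ℝ) ^ d := by rw [hRd]; ring
        _ = ((R ^ (n+1) : ℝ)) ^ d := by
            rw [← Real.mul_rpow hR0.le (pow_nonneg hR0.le n), ← pow_succ']
  set C₂ : ℝ := M * max 1 (R ^ (-d)) with hC₂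
  set m0 : ℝ := min ((1:ℝ) ^ d) (R ^ d) with hm0
  have hm00 : 0 < m0 := lt_min (Real.rpow_pos_of_pos one_pos d)
    (Real.rpow_pos_of_pos hR0 d)
  set C₁ : ℝ := M / m0 with hC₁
  have hC₁0 : 0 < C₁ := div_pos hM0 hm00
  have hC₂0 : 0 < C₂ := mul_pos hM0 (lt_of_lt_of_le one_pos (le_max_left _ _))
  refine ⟨d, hdb, C₁ + C₂, by positivity, ?_⟩
  intro l t hl1 ht
  have hl0 : 0 < l := lt_of_lt_of_le one_pos hl1
  have hld0 : 0 < l ^ d := Real.rpow_pos_of_pos hl0 d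
  rcases le_or_gt R l with hRl | hlR
  · -- large l
    have hex : ∃ k : ℕ, l < R ^ k := pow_unbounded_of_one_lt l hR1
    set n' : ℕ := Nat.find hex with hn'
    have hn'1 : l < R ^ n' := Nat.find_spec hex
    have hn'0 : 0 < n' := by
      rcases Nat.eq_zero_or_pos n' with h0 | h0
      · exfalso
        rw [h0, pow_zero] at hn'1
        exact absurd hn'1 (not_lt.mpr hl1)
      · exact h0
    set n : ℕ := n' - 1 with hnn
    have hnsucc : n + 1 = n' := Nat.sub_add_cancel hn'0
    have hn2 : l < R ^ (n+1) := by rw [hnsucc]; exact hn'1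
    have hn1 : R ^ n ≤ l := by
      have h := Nat.find_min hex (show n < n' by omega)
      exact not_lt.mp h
    have hpn : (0:ℝ) < R ^ n := pow_pos hR0 n
    set s : ℝ := l / R ^ n with hsdef
    have hs0 : 0 < s := div_pos hl0 hpn
    have hs1 : 1 ≤ s := (one_le_div hpn).mpr hn1
    have hs2 : s ≤ R := by
      rw [hsdef, div_le_iff₀ hpn]
      calc l ≤ R ^ (n+1) := hn2.le
        _ = R * R ^ n := pow_succ' R n
    have hst : 0 < s * t := mul_pos hs0 ht
    have hsplit : φ (l * t) / φ t
        = φ (R ^ n * (s * t)) / φ (s * t) * (φ (s * t) / φ t) := by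
      rw [aux_ratio_split _ (φ (s * t)) _ (ne_of_gt (hpos _ hst))]
      congr 3
      rw [hsdef]; field_simp
    have hkey : φ (R ^ n * (s * t)) / φ (s * t) ≤ ((R ^ n : ℝ)) ^ d := key n _ hst
    have hMn : φ (s * t) / φ t ≤ M := hM s t hs1 hs2 ht
    have hdn : ((R ^ n : ℝ)) ^ d ≤ max 1 (R ^ (-d)) * l ^ d := by
      rcases le_or_gt 0 d with hds | hds
      · have h : ((R ^ n : ℝ)) ^ d ≤ l ^ d := Real.rpow_le_rpow hpn.le hn1 hds
        exact le_trans h (le_mul_of_one_le_left hld0.le (le_max_left _ _))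
      · have h : ((R ^ (n+1) : ℝ)) ^ d ≤ l ^ d :=
          Real.rpow_le_rpow_of_nonpos hl0 hn2.le hds.le
        have hRd0 : (0:ℝ) < R ^ d := Real.rpow_pos_of_pos hR0 d
        calc ((R ^ n : ℝ)) ^ d = R ^ (-d) * ((R ^ (n+1) : ℝ)) ^ d := by
              rw [pow_succ', Real.mul_rpow hR0.le (pow_nonneg hR0.le n),
                Real.rpow_neg hR0.le]
              field_simp
          _ ≤ R ^ (-d) * l ^ d :=
              mul_le_mul_of_nonneg_left h (Real.rpow_nonneg hR0.le _)
          _ ≤ max 1 (R ^ (-d)) * l ^ d :=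
              mul_le_mul_of_nonneg_right (le_max_right _ _) hld0.le
    calc φ (l * t) / φ t
        = φ (R ^ n * (s * t)) / φ (s * t) * (φ (s * t) / φ t) := hsplit
      _ ≤ ((R ^ n : ℝ)) ^ d * M := by
          apply mul_le_mul hkey hMn (div_nonneg (hpos _ hst).le (hpos t ht).le)
          positivity
      _ ≤ (max 1 (R ^ (-d)) * l ^ d) * M :=
          mul_le_mul_of_nonneg_right hdn hM0.le
      _ = C₂ * l ^ d := by rw [hC₂]; ring
      _ ≤ (C₁ + C₂) * l ^ d := by nlinarith
  · -- l ∈ [1, R)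
    have h1 : φ (l * t) / φ t ≤ M := hM l t hl1 hlR.le ht
    have h2 : m0 ≤ l ^ d := aux_min_le_rpow one_pos hl1 hlR.le
    calc φ (l * t) / φ t ≤ M := h1
      _ = C₁ * m0 := by rw [hC₁, div_mul_cancel₀ _ (ne_of_gt hm00)]
      _ ≤ C₁ * l ^ d := mul_le_mul_of_nonneg_left h2 hC₁0.le
      _ ≤ (C₁ + C₂) * l ^ d := by nlinarith


/-- `φ ∈ I(a,b)`: `φ : (0,∞) → (0,∞)` and `s_φ(λ) = sup_{t>0} φ(λt)/φ(t)` satisfies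
`s_φ(λ) = O(λ^a)` as `λ → 0` and `s_φ(λ) = O(λ^b)` as `λ → ∞`. -/
def MemI (a b : ℝ) (φ : ℝ → ℝ) : Prop :=
  (∀ t : ℝ, 0 < t → 0 < φ t) ∧
  (∃ C : ℝ, 0 < C ∧ ∀ l t : ℝ, 0 < l → l ≤ 1 → 0 < t → φ (l * t) / φ t ≤ C * l ^ a) ∧
  (∃ C : ℝ, 0 < C ∧ ∀ l t : ℝ, 1 ≤ l → 0 < t → φ (l * t) / φ t ≤ C * l ^ b)

/-- `φ ∈ I_o(a,b)`: as `MemI` but with little-o in place of big-O. -/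
def MemIo (a b : ℝ) (φ : ℝ → ℝ) : Prop :=
  (∀ t : ℝ, 0 < t → 0 < φ t) ∧
  (∀ ε : ℝ, 0 < ε → ∃ δ : ℝ, 0 < δ ∧
    ∀ l t : ℝ, 0 < l → l ≤ δ → 0 < t → φ (l * t) / φ t ≤ ε * l ^ a) ∧
  (∀ ε : ℝ, 0 < ε → ∃ R : ℝ, 1 ≤ R ∧
    ∀ l t : ℝ, R ≤ l → 0 < t → φ (l * t) / φ t ≤ ε * l ^ b)

/-- `⋃ {c > a, d < b} I(c,d) = I_o(a,b)`. -/
theorem iUnion_memI_eq_memIo (a b : ℝ) (φ : ℝ → ℝ) :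
    (∃ c : ℝ, a < c ∧ ∃ d : ℝ, d < b ∧ MemI c d φ) ↔ MemIo a b φ := by
  constructor
  · rintro ⟨c, hac, d, hdb, hpos, ⟨C₁, hC₁, h1⟩, ⟨C₂, hC₂, h2⟩⟩
    have hca : (0:ℝ) < c - a := sub_pos.mpr hac
    have hbd : (0:ℝ) < b - d := sub_pos.mpr hdb
    refine ⟨hpos, ?_, ?_⟩
    · intro ε hε
      have hεC : (0:ℝ) < ε / C₁ := div_pos hε hC₁
      refine ⟨min 1 ((ε / C₁) ^ ((1:ℝ)/(c-a))), lt_min one_pos (Real.rpow_pos_of_pos hεC _), ?_⟩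
      intro l t hl0 hlδ ht
      have hl1 : l ≤ 1 := le_trans hlδ (min_le_left _ _)
      have hbase := h1 l t hl0 hl1 ht
      have h3 : l ^ (c - a) ≤ ε / C₁ := by
        have hstep : l ^ (c-a) ≤ ((ε / C₁) ^ ((1:ℝ)/(c-a))) ^ (c-a) :=
          Real.rpow_le_rpow hl0.le (le_trans hlδ (min_le_right _ _)) hca.le
        have heq : ((ε / C₁) ^ ((1:ℝ)/(c-a))) ^ (c-a) = ε / C₁ := by
          rw [← Real.rpow_mul hεC.le, one_div_mul_cancel (ne_of_gt hca), Real.rpow_one]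
        rwa [heq] at hstep
      have hlsplit : l ^ c = l ^ a * l ^ (c - a) := by
        rw [← Real.rpow_add hl0]; congr 1; ring
      calc φ (l * t) / φ t ≤ C₁ * l ^ c := hbase
        _ = C₁ * (l ^ a * l ^ (c-a)) := by rw [hlsplit]
        _ ≤ C₁ * (l ^ a * (ε / C₁)) := by
            apply mul_le_mul_of_nonneg_left _ hC₁.le
            exact mul_le_mul_of_nonneg_left h3 (Real.rpow_nonneg hl0.le a)
        _ = ε * l ^ a := by field_simp
    · intro ε hε
      have hCε : (0:ℝ) < C₂ / ε := div_pos hC₂ hε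
      refine ⟨max 1 ((C₂ / ε) ^ ((1:ℝ)/(b-d))), le_max_left _ _, ?_⟩
      intro l t hlR ht
      have hl1 : (1:ℝ) ≤ l := le_trans (le_max_left _ _) hlR
      have hl0 : (0:ℝ) < l := lt_of_lt_of_le one_pos hl1
      have hbase := h2 l t hl1 ht
      have h4 : C₂ / ε ≤ l ^ (b - d) := by
        have hstep : ((C₂ / ε) ^ ((1:ℝ)/(b-d))) ^ (b-d) ≤ l ^ (b-d) :=
          Real.rpow_le_rpow (Real.rpow_nonneg hCε.le _)
            (le_trans (le_max_right _ _) hlR) hbd.le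
        have heq : ((C₂ / ε) ^ ((1:ℝ)/(b-d))) ^ (b-d) = C₂ / ε := by
          rw [← Real.rpow_mul hCε.le, one_div_mul_cancel (ne_of_gt hbd), Real.rpow_one]
        rwa [heq] at hstep
      have h5 : C₂ ≤ l ^ (b-d) * ε := (div_le_iff₀ hε).mp h4
      have hlsplit : l ^ b = l ^ d * l ^ (b - d) := by
        rw [← Real.rpow_add hl0]; congr 1; ring
      calc φ (l * t) / φ t ≤ C₂ * l ^ d := hbase
        _ ≤ (l ^ (b-d) * ε) * l ^ d :=
            mul_le_mul_of_nonneg_right h5 (Real.rpow_nonneg hl0.le d)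
        _ = ε * l ^ b := by rw [hlsplit]; ring
  · rintro ⟨hpos, h2, h3⟩
    obtain ⟨δ₁, hδ₁0, hs₁⟩ := h2 (1/2) (by norm_num)
    set δ : ℝ := min δ₁ (1/2) with hδdef
    have hδ0 : 0 < δ := lt_min hδ₁0 (by norm_num)
    have hδ1 : δ < 1 := lt_of_le_of_lt (min_le_right _ _) (by norm_num)
    have hs : ∀ l t : ℝ, 0 < l → l ≤ δ → 0 < t → φ (l * t) / φ t ≤ (1/2) * l ^ a :=
      fun l t u v w => hs₁ l t u (le_trans v (min_le_left _ _)) w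
    obtain ⟨R₁, hR₁1, hl₁⟩ := h3 (1/2) (by norm_num)
    set R : ℝ := max R₁ 2 with hRdef
    have hR2 : (2:ℝ) ≤ R := le_max_right _ _
    have hR1 : (1:ℝ) ≤ R := le_trans one_le_two hR2
    have hlb : ∀ l t : ℝ, R ≤ l → 0 < t → φ (l * t) / φ t ≤ (1/2) * l ^ b :=
      fun l t u w => hl₁ l t (le_trans (le_max_left _ _) u) w
    have hs' : ∀ l t : ℝ, 0 < l → l ≤ δ → 0 < t → φ (l * t) / φ t ≤ l ^ a := by
      intro l t u v w
      have := Real.rpow_nonneg u.le a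
      linarith [hs l t u v w]
    have hlb' : ∀ l t : ℝ, R ≤ l → 0 < t → φ (l * t) / φ t ≤ l ^ b := by
      intro l t u w
      have hl0 : (0:ℝ) < l := lt_of_lt_of_le (lt_of_lt_of_le one_pos hR1) u
      have := Real.rpow_nonneg hl0.le b
      linarith [hlb l t u w]
    obtain ⟨M₁, hM₁0, hM₁⟩ := aux_glob_bound hpos hδ0 hs' hR1 hlb' δ 1 hδ0
    obtain ⟨M₂, hM₂0, hM₂⟩ := aux_glob_bound hpos hδ0 hs' hR1 hlb' 1 R one_pos
    obtain ⟨c, hac, Cs, hCs, hcs⟩ := aux_small_side hpos hδ0 hδ1 hs hM₁0 hM₁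
    obtain ⟨d, hdb, Cl, hCl, hcl⟩ := aux_large_side hpos hR2 hlb hM₂0 hM₂
    exact ⟨c, hac, d, hdb, hpos, ⟨Cs, hCs, hcs⟩, ⟨Cl, hCl, hcl⟩⟩
end

section
/- If φ ∈ I_o(a,b), then there exist ε > 0 and constants 0 < c ≤ C such that for all t > 0 and all λ ≥ 1, c·λ^{a+ε} ≤ φ(λt)/φ(t) ≤ C·λ^{b-ε}. -/
lemma ratio_split {φ : ℝ → ℝ} (hpos : ∀ t : ℝ, 0 < t → 0 < φ t) {l₁ l₂ t : ℝ}
    (h₂ : 0 < l₂) (ht : 0 < t) :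
    φ (l₁ * l₂ * t) / φ t = φ (l₁ * (l₂ * t)) / φ (l₂ * t) * (φ (l₂ * t) / φ t) := by
  rw [mul_assoc, div_mul_div_cancel₀ (hpos _ (mul_pos h₂ ht)).ne']

/-- If `φ ∈ I_o(a,b)`, there exist `ε > 0` and `0 < c ≤ C` such that for all `t > 0`
and `λ ≥ 1`, `c·λ^(a+ε) ≤ φ(λt)/φ(t) ≤ C·λ^(b-ε)`. -/
theorem memIo_scaling (a b : ℝ) (φ : ℝ → ℝ) (hφ : MemIo a b φ) :
    ∃ ε : ℝ, 0 < ε ∧ ∃ c C : ℝ, 0 < c ∧ c ≤ C ∧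
      ∀ t l : ℝ, 0 < t → 1 ≤ l →
        c * l ^ (a + ε) ≤ φ (l * t) / φ t ∧ φ (l * t) / φ t ≤ C * l ^ (b - ε) := by
  obtain ⟨hpos, h0, hinf⟩ := hφ
  obtain ⟨δ₀, hδ₀, hδ'⟩ := h0 (1/2) (by norm_num)
  obtain ⟨R₀, hR₀, hR'⟩ := hinf (1/2) (by norm_num)
  set δ : ℝ := min δ₀ (1/2) with hδdef
  set R : ℝ := max R₀ 2 with hRdef
  have hδpos : 0 < δ := lt_min hδ₀ (by norm_num)
  have hδle : δ ≤ 1/2 := min_le_right _ _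
  have hδlt1 : δ < 1 := lt_of_le_of_lt hδle (by norm_num)
  have hδ2δ : δ^2 ≤ δ := by
    rw [sq]
    calc δ * δ ≤ 1 * δ := mul_le_mul_of_nonneg_right hδlt1.le hδpos.le
      _ = δ := one_mul δ
  have hR2 : (2:ℝ) ≤ R := le_max_right _ _
  have hR1 : (1:ℝ) < R := by linarith
  have hRpos : (0:ℝ) < R := by linarith
  have hsmall : ∀ l t : ℝ, 0 < l → l ≤ δ → 0 < t → φ (l * t) / φ t ≤ (1/2) * l ^ a :=
    fun l t hl hld ht => hδ' l t hl (hld.trans (min_le_left _ _)) ht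
  have hbig : ∀ l t : ℝ, R ≤ l → 0 < t → φ (l * t) / φ t ≤ (1/2) * l ^ b :=
    fun l t hl ht => hR' l t ((le_max_left _ _).trans hl) ht
  -- middle-range uniform bound
  set M : ℝ := R / δ with hMdef
  have hMpos : 0 < M := div_pos hRpos hδpos
  have hMR : R ≤ M := by
    rw [hMdef, le_div_iff₀ hδpos]
    calc R * δ ≤ R * 1 := mul_le_mul_of_nonneg_left (by linarith) hRpos.le
      _ = R := mul_one R
  set K : ℝ := (1/4) * ((δ^2/M) ^ a + δ ^ a) * M ^ b with hKdef
  have hKpos : 0 < K := by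
    have h1 : (0:ℝ) < (δ^2/M) ^ a := Real.rpow_pos_of_pos (by positivity) a
    have h2 : (0:ℝ) < δ ^ a := Real.rpow_pos_of_pos hδpos a
    have h3 : (0:ℝ) < M ^ b := Real.rpow_pos_of_pos hMpos b
    positivity
  have hmid : ∀ l t : ℝ, δ^2 ≤ l → l ≤ R → 0 < t → φ (l * t) / φ t ≤ K := by
    intro l t hl1 hl2 ht
    have hlpos : 0 < l := lt_of_lt_of_le (by positivity) hl1
    have key : φ (l * t) / φ t = φ ((l/M) * (M*t)) / φ (M*t) * (φ (M*t) / φ t) := by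
      have h := ratio_split hpos (l₁ := l/M) (l₂ := M) hMpos ht
      rwa [div_mul_cancel₀ _ hMpos.ne'] at h
    have hlM : l / M ≤ δ := by
      rw [div_le_iff₀ hMpos, hMdef]
      rw [hMdef] at hMR
      have : δ * (R / δ) = R := by field_simp
      rw [this]; exact hl2
    have h1 : φ ((l/M) * (M*t)) / φ (M*t) ≤ (1/2) * (l/M) ^ a :=
      hsmall _ _ (div_pos hlpos hMpos) hlM (mul_pos hMpos ht)
    have h2 : φ (M*t) / φ t ≤ (1/2) * M ^ b := hbig _ _ hMR ht
    have hra : (l/M) ^ a ≤ (δ^2/M) ^ a + δ ^ a := by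
      rcases le_or_gt 0 a with ha | ha
      · have h : (l/M) ^ a ≤ δ ^ a :=
          Real.rpow_le_rpow (by positivity) hlM ha
        have hp : (0:ℝ) < (δ^2/M) ^ a := Real.rpow_pos_of_pos (by positivity) a
        exact h.trans (le_add_of_nonneg_left hp.le)
      · have hle : δ^2/M ≤ l/M := by gcongr
        have h : (l/M) ^ a ≤ (δ^2/M) ^ a :=
          Real.rpow_le_rpow_of_nonpos (by positivity) hle ha.le
        have hp : (0:ℝ) < δ ^ a := Real.rpow_pos_of_pos hδpos a
        exact h.trans (le_add_of_nonneg_right hp.le)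
    rw [key]
    have hq1 : (0:ℝ) ≤ φ ((l/M) * (M*t)) / φ (M*t) :=
      le_of_lt (div_pos (hpos _ (by positivity)) (hpos _ (by positivity)))
    have hq2 : (0:ℝ) ≤ φ (M*t) / φ t :=
      le_of_lt (div_pos (hpos _ (by positivity)) (hpos _ ht))
    have hMb : (0:ℝ) < M ^ b := Real.rpow_pos_of_pos hMpos b
    calc φ ((l/M) * (M*t)) / φ (M*t) * (φ (M*t) / φ t)
        ≤ (1/2) * (l/M) ^ a * ((1/2) * M ^ b) := by
          apply mul_le_mul h1 h2 hq2
          have : (0:ℝ) < (l/M) ^ a := Real.rpow_pos_of_pos (div_pos hlpos hMpos) a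
          positivity
      _ = (1/4) * (l/M) ^ a * M ^ b := by ring
      _ ≤ K := by
          rw [hKdef]
          have h4 : (1/4 : ℝ) * (l/M) ^ a ≤ (1/4) * ((δ^2/M) ^ a + δ ^ a) :=
            mul_le_mul_of_nonneg_left hra (by norm_num)
          exact mul_le_mul_of_nonneg_right h4 hMb.le
  -- iterated upper bound along powers of R
  have hupow : ∀ n : ℕ, ∀ t : ℝ, 0 < t → φ (R^n * t) / φ t ≤ ((1/2) * R ^ b)^n := by
    intro n
    induction n with
    | zero => intro t ht; simp [div_self (hpos t ht).ne']
    | succ n ih =>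
      intro t ht
      have key : φ (R^(n+1) * t) / φ t
          = φ (R * (R^n * t)) / φ (R^n * t) * (φ (R^n * t) / φ t) := by
        have h := ratio_split hpos (l₁ := R) (l₂ := R^n) (pow_pos hRpos n) ht
        rw [show R * R^n = R^(n+1) by ring] at h
        exact h
      rw [key, pow_succ]
      have h1 : φ (R * (R^n * t)) / φ (R^n * t) ≤ (1/2) * R ^ b :=
        hbig _ _ le_rfl (mul_pos (pow_pos hRpos n) ht)
      have h2 := ih t ht
      have hq2 : (0:ℝ) ≤ φ (R^n * t) / φ t :=
        le_of_lt (div_pos (hpos _ (mul_pos (pow_pos hRpos n) ht)) (hpos _ ht))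
      have hq1 : (0:ℝ) ≤ (1/2) * R ^ b := by
        have := Real.rpow_pos_of_pos hRpos b; positivity
      calc φ (R * (R^n * t)) / φ (R^n * t) * (φ (R^n * t) / φ t)
          ≤ ((1/2) * R ^ b) * ((1/2) * R ^ b)^n :=
            mul_le_mul h1 h2 hq2 hq1
        _ = ((1/2) * R ^ b)^n * ((1/2) * R ^ b) := by ring
  -- iterated lower-side bound along powers of δ
  have hdpow : ∀ n : ℕ, ∀ t : ℝ, 0 < t → φ (δ^n * t) / φ t ≤ ((1/2) * δ ^ a)^n := by
    intro n
    induction n with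
    | zero => intro t ht; simp [div_self (hpos t ht).ne']
    | succ n ih =>
      intro t ht
      have key : φ (δ^(n+1) * t) / φ t
          = φ (δ * (δ^n * t)) / φ (δ^n * t) * (φ (δ^n * t) / φ t) := by
        have h := ratio_split hpos (l₁ := δ) (l₂ := δ^n) (pow_pos hδpos n) ht
        rw [show δ * δ^n = δ^(n+1) by ring] at h
        exact h
      rw [key, pow_succ]
      have h1 : φ (δ * (δ^n * t)) / φ (δ^n * t) ≤ (1/2) * δ ^ a :=
        hsmall _ _ hδpos le_rfl (mul_pos (pow_pos hδpos n) ht)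
      have h2 := ih t ht
      have hq2 : (0:ℝ) ≤ φ (δ^n * t) / φ t :=
        le_of_lt (div_pos (hpos _ (mul_pos (pow_pos hδpos n) ht)) (hpos _ ht))
      have hq1 : (0:ℝ) ≤ (1/2) * δ ^ a := by
        have := Real.rpow_pos_of_pos hδpos a; positivity
      calc φ (δ * (δ^n * t)) / φ (δ^n * t) * (φ (δ^n * t) / φ t)
          ≤ ((1/2) * δ ^ a) * ((1/2) * δ ^ a)^n :=
            mul_le_mul h1 h2 hq2 hq1
        _ = ((1/2) * δ ^ a)^n * ((1/2) * δ ^ a) := by ring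
  -- exponents
  set ε₀ : ℝ := Real.log 2 / Real.log R with hε₀def
  have hlogR : 0 < Real.log R := Real.log_pos hR1
  have hε₀pos : 0 < ε₀ := div_pos (Real.log_pos one_lt_two) hlogR
  have hRε₀ : R ^ ε₀ = 2 := by
    rw [Real.rpow_def_of_pos hRpos, hε₀def, mul_div_cancel₀ _ hlogR.ne', Real.exp_log two_pos]
  have hRkey : (1/2) * R ^ b = R ^ (b - ε₀) := by
    rw [Real.rpow_sub hRpos, hRε₀]; ring
  set ε₁ : ℝ := Real.log 2 / (-Real.log δ) with hε₁def
  have hlogδ : Real.log δ < 0 := Real.log_neg hδpos hδlt1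
  have hε₁pos : 0 < ε₁ := div_pos (Real.log_pos one_lt_two) (by linarith)
  have hδε₁ : δ ^ ε₁ = 1/2 := by
    rw [Real.rpow_def_of_pos hδpos, hε₁def]
    rw [show Real.log δ * (Real.log 2 / -Real.log δ) = -Real.log 2 by
      field_simp
      rw [neg_inj, div_self hlogδ.ne]]
    rw [Real.exp_neg, Real.exp_log two_pos]; norm_num
  have hδkey : (1/2) * δ ^ a = δ ^ (a + ε₁) := by
    rw [Real.rpow_add hδpos, hδε₁]; ring
  -- upper bound for all l ≥ 1
  set CU : ℝ := K * (1 + R ^ (ε₀ - b)) with hCUdef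
  have hCUpos : 0 < CU := by
    have := Real.rpow_pos_of_pos hRpos (ε₀ - b); positivity
  have hupper : ∀ t l : ℝ, 0 < t → 1 ≤ l → φ (l * t) / φ t ≤ CU * l ^ (b - ε₀) := by
    intro t l ht hl
    have hlpos : 0 < l := lt_of_lt_of_le one_pos hl
    set n : ℕ := ⌊Real.logb R l⌋₊ with hndef
    have hx : 0 ≤ Real.logb R l := Real.logb_nonneg hR1 hl
    have hn1 : (n:ℝ) ≤ Real.logb R l := Nat.floor_le hx
    have hn2 : Real.logb R l < n + 1 := Nat.lt_floor_add_one _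
    have hRl : R ^ Real.logb R l = l := Real.rpow_logb hRpos hR1.ne' hlpos
    have hl1 : (R:ℝ)^n ≤ l := by
      have h := Real.rpow_le_rpow_of_exponent_le hR1.le hn1
      rwa [Real.rpow_natCast, hRl] at h
    have hl2 : l ≤ (R:ℝ)^(n+1) := by
      have h := Real.rpow_le_rpow_of_exponent_le hR1.le hn2.le
      rw [hRl] at h
      rwa [show ((n:ℝ)+1) = ((n+1 : ℕ) : ℝ) by push_cast; ring, Real.rpow_natCast] at h
    have hRnpos : (0:ℝ) < R^n := pow_pos hRpos n
    set m : ℝ := l / R^n with hmdef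
    have hm1 : 1 ≤ m := (one_le_div hRnpos).mpr hl1
    have hm2 : m ≤ R := by
      rw [hmdef, div_le_iff₀ hRnpos]
      calc l ≤ R^(n+1) := hl2
        _ = R * R^n := by ring
    have key : φ (l * t) / φ t = φ (m * (R^n * t)) / φ (R^n * t) * (φ (R^n * t) / φ t) := by
      have h := ratio_split hpos (l₁ := m) (l₂ := R^n) hRnpos ht
      rwa [hmdef, div_mul_cancel₀ _ hRnpos.ne'] at h
    have hδ21 : δ^2 ≤ 1 := hδ2δ.trans hδlt1.le
    have h1 : φ (m * (R^n * t)) / φ (R^n * t) ≤ K :=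
      hmid m _ (hδ21.trans hm1) hm2 (mul_pos hRnpos ht)
    have h2 : φ (R^n * t) / φ t ≤ R ^ ((b - ε₀) * n) := by
      have h := hupow n t ht
      rwa [hRkey, ← Real.rpow_natCast (R ^ (b - ε₀)) n, ← Real.rpow_mul hRpos.le] at h
    have h3 : R ^ ((b - ε₀) * n) ≤ (1 + R ^ (ε₀ - b)) * l ^ (b - ε₀) := by
      have hlbe : (0:ℝ) < l ^ (b - ε₀) := Real.rpow_pos_of_pos hlpos _
      rcases le_or_gt 0 (b - ε₀) with hbe | hbe
      · have h := Real.rpow_le_rpow hRnpos.le hl1 hbe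
        rw [← Real.rpow_natCast R n, ← Real.rpow_mul hRpos.le, mul_comm] at h
        have hp : (0:ℝ) < R ^ (ε₀ - b) := Real.rpow_pos_of_pos hRpos _
        calc R ^ ((b - ε₀) * (n:ℝ)) ≤ l ^ (b - ε₀) := h
          _ = 1 * l ^ (b - ε₀) := (one_mul _).symm
          _ ≤ (1 + R ^ (ε₀ - b)) * l ^ (b - ε₀) :=
              mul_le_mul_of_nonneg_right (le_add_of_nonneg_right hp.le) hlbe.le
      · have hstep : ((R:ℝ)^(n+1)) ^ (b - ε₀) ≤ l ^ (b - ε₀) :=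
          Real.rpow_le_rpow_of_nonpos hlpos hl2 hbe.le
        rw [← Real.rpow_natCast R (n+1), ← Real.rpow_mul hRpos.le] at hstep
        have hstep2 : R ^ ((b - ε₀) * (n:ℝ)) * R ^ (b - ε₀) ≤ l ^ (b - ε₀) := by
          refine le_trans (le_of_eq ?_) hstep
          rw [← Real.rpow_add hRpos]
          congr 1; push_cast; ring
        have hp : (0:ℝ) < R ^ (ε₀ - b) := Real.rpow_pos_of_pos hRpos _
        have hEq : R ^ (ε₀ - b) * (R ^ ((b - ε₀) * (n:ℝ)) * R ^ (b - ε₀))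
            = R ^ ((b - ε₀) * (n:ℝ)) := by
          rw [← Real.rpow_add hRpos, ← Real.rpow_add hRpos]
          congr 1; ring
        calc R ^ ((b - ε₀) * (n:ℝ))
            = R ^ (ε₀ - b) * (R ^ ((b - ε₀) * (n:ℝ)) * R ^ (b - ε₀)) := hEq.symm
          _ ≤ R ^ (ε₀ - b) * l ^ (b - ε₀) := mul_le_mul_of_nonneg_left hstep2 hp.le
          _ ≤ (1 + R ^ (ε₀ - b)) * l ^ (b - ε₀) :=
              mul_le_mul_of_nonneg_right (le_add_of_nonneg_left zero_le_one) hlbe.le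
    have hq2 : (0:ℝ) ≤ φ (R^n * t) / φ t :=
      le_of_lt (div_pos (hpos _ (mul_pos hRnpos ht)) (hpos _ ht))
    calc φ (l * t) / φ t
        = φ (m * (R^n * t)) / φ (R^n * t) * (φ (R^n * t) / φ t) := key
      _ ≤ K * R ^ ((b - ε₀) * n) := mul_le_mul h1 h2 hq2 hKpos.le
      _ ≤ K * ((1 + R ^ (ε₀ - b)) * l ^ (b - ε₀)) :=
          mul_le_mul_of_nonneg_left h3 hKpos.le
      _ = CU * l ^ (b - ε₀) := by rw [hCUdef]; ring
  -- bound on s(m) for m ∈ (0,1]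
  set C₂ : ℝ := K * (1 + δ ^ (-(a + ε₁))) with hC₂def
  have hC₂pos : 0 < C₂ := by
    have := Real.rpow_pos_of_pos hδpos (-(a + ε₁)); positivity
  have hsmallall : ∀ m t : ℝ, 0 < m → m ≤ 1 → 0 < t → φ (m * t) / φ t ≤ C₂ * m ^ (a + ε₁) := by
    intro m t hmpos hm1 ht
    set x : ℝ := Real.logb δ m with hxdef
    have hlogm : Real.log m ≤ 0 := Real.log_nonpos hmpos.le hm1
    have hx : 0 ≤ x := by
      rw [hxdef, Real.logb, div_nonneg_iff]
      right; exact ⟨hlogm, hlogδ.le⟩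
    set n : ℕ := ⌊x⌋₊ with hndef
    have hn1 : (n:ℝ) ≤ x := Nat.floor_le hx
    have hn2 : x < n + 1 := Nat.lt_floor_add_one _
    have hδx : δ ^ x = m := Real.rpow_logb hδpos hδlt1.ne hmpos
    have hm2 : m ≤ δ^n := by
      have h := Real.rpow_le_rpow_of_exponent_ge hδpos hδlt1.le hn1
      rwa [hδx, Real.rpow_natCast] at h
    have hm3 : δ^(n+1) ≤ m := by
      have h := Real.rpow_le_rpow_of_exponent_ge hδpos hδlt1.le hn2.le
      rw [hδx] at h
      rwa [show ((n:ℝ)+1) = ((n+1 : ℕ) : ℝ) by push_cast; ring, Real.rpow_natCast] at h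
    have hδnpos : (0:ℝ) < δ^n := pow_pos hδpos n
    set μ : ℝ := m / δ^n with hμdef
    have hμ1 : μ ≤ 1 := (div_le_one hδnpos).mpr hm2
    have hμ2 : δ ≤ μ := by
      rw [hμdef, le_div_iff₀ hδnpos]
      calc δ * δ^n = δ^(n+1) := by ring
        _ ≤ m := hm3
    have hμδ2 : δ^2 ≤ μ := hδ2δ.trans hμ2
    have hμR : μ ≤ R := hμ1.trans hR1.le
    have key : φ (m * t) / φ t = φ (μ * (δ^n * t)) / φ (δ^n * t) * (φ (δ^n * t) / φ t) := by
      have h := ratio_split hpos (l₁ := μ) (l₂ := δ^n) hδnpos ht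
      rwa [hμdef, div_mul_cancel₀ _ hδnpos.ne'] at h
    have h1 : φ (μ * (δ^n * t)) / φ (δ^n * t) ≤ K :=
      hmid μ _ hμδ2 hμR (mul_pos hδnpos ht)
    have h2 : φ (δ^n * t) / φ t ≤ δ ^ ((a + ε₁) * n) := by
      have h := hdpow n t ht
      rwa [hδkey, ← Real.rpow_natCast (δ ^ (a + ε₁)) n, ← Real.rpow_mul hδpos.le] at h
    have h3 : δ ^ ((a + ε₁) * n) ≤ (1 + δ ^ (-(a + ε₁))) * m ^ (a + ε₁) := by
      have hmae : (0:ℝ) < m ^ (a + ε₁) := Real.rpow_pos_of_pos hmpos _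
      rcases le_or_gt (a + ε₁) 0 with hae | hae
      · have h : (δ^n : ℝ) ^ (a + ε₁) ≤ m ^ (a + ε₁) :=
          Real.rpow_le_rpow_of_nonpos hmpos hm2 hae
        rw [← Real.rpow_natCast δ n, ← Real.rpow_mul hδpos.le, mul_comm] at h
        have hp : (0:ℝ) < δ ^ (-(a + ε₁)) := Real.rpow_pos_of_pos hδpos _
        calc δ ^ ((a + ε₁) * (n:ℝ)) ≤ m ^ (a + ε₁) := h
          _ = 1 * m ^ (a + ε₁) := (one_mul _).symm
          _ ≤ (1 + δ ^ (-(a + ε₁))) * m ^ (a + ε₁) :=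
              mul_le_mul_of_nonneg_right (le_add_of_nonneg_right hp.le) hmae.le
      · have hstep : ((δ:ℝ)^(n+1)) ^ (a + ε₁) ≤ m ^ (a + ε₁) :=
          Real.rpow_le_rpow (by positivity) hm3 hae.le
        rw [← Real.rpow_natCast δ (n+1), ← Real.rpow_mul hδpos.le] at hstep
        have hstep2 : δ ^ ((a + ε₁) * (n:ℝ)) * δ ^ (a + ε₁) ≤ m ^ (a + ε₁) := by
          refine le_trans (le_of_eq ?_) hstep
          rw [← Real.rpow_add hδpos]
          congr 1; push_cast; ring
        have hp : (0:ℝ) < δ ^ (-(a + ε₁)) := Real.rpow_pos_of_pos hδpos _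
        have hEq : δ ^ (-(a + ε₁)) * (δ ^ ((a + ε₁) * (n:ℝ)) * δ ^ (a + ε₁))
            = δ ^ ((a + ε₁) * (n:ℝ)) := by
          rw [← Real.rpow_add hδpos, ← Real.rpow_add hδpos]
          congr 1; ring
        calc δ ^ ((a + ε₁) * (n:ℝ))
            = δ ^ (-(a + ε₁)) * (δ ^ ((a + ε₁) * (n:ℝ)) * δ ^ (a + ε₁)) := hEq.symm
          _ ≤ δ ^ (-(a + ε₁)) * m ^ (a + ε₁) := mul_le_mul_of_nonneg_left hstep2 hp.le
          _ ≤ (1 + δ ^ (-(a + ε₁))) * m ^ (a + ε₁) :=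
              mul_le_mul_of_nonneg_right (le_add_of_nonneg_left zero_le_one) hmae.le
    have hq2 : (0:ℝ) ≤ φ (δ^n * t) / φ t :=
      le_of_lt (div_pos (hpos _ (mul_pos hδnpos ht)) (hpos _ ht))
    calc φ (m * t) / φ t
        = φ (μ * (δ^n * t)) / φ (δ^n * t) * (φ (δ^n * t) / φ t) := key
      _ ≤ K * δ ^ ((a + ε₁) * n) := mul_le_mul h1 h2 hq2 hKpos.le
      _ ≤ K * ((1 + δ ^ (-(a + ε₁))) * m ^ (a + ε₁)) :=
          mul_le_mul_of_nonneg_left h3 hKpos.le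
      _ = C₂ * m ^ (a + ε₁) := by rw [hC₂def]; ring
  -- lower bound for l ≥ 1
  have hlower : ∀ t l : ℝ, 0 < t → 1 ≤ l → C₂⁻¹ * l ^ (a + ε₁) ≤ φ (l * t) / φ t := by
    intro t l ht hl
    have hlpos : 0 < l := lt_of_lt_of_le one_pos hl
    have hlt : 0 < l * t := mul_pos hlpos ht
    have h := hsmallall (1/l) (l * t) (by positivity)
      (by rw [div_le_one hlpos]; exact hl) hlt
    rw [show (1/l) * (l * t) = t by field_simp] at h
    have hLpos : (0:ℝ) < l ^ (a + ε₁) := Real.rpow_pos_of_pos hlpos _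
    have hrw : (1/l : ℝ) ^ (a + ε₁) = (l ^ (a + ε₁))⁻¹ := by
      rw [one_div, Real.inv_rpow hlpos.le]
    rw [hrw] at h
    have hA : 0 < φ t := hpos t ht
    have hB : 0 < φ (l * t) := hpos _ hlt
    rw [div_le_iff₀ hB] at h
    rw [le_div_iff₀ hA]
    calc C₂⁻¹ * l ^ (a + ε₁) * φ t
        ≤ C₂⁻¹ * l ^ (a + ε₁) * (C₂ * (l ^ (a + ε₁))⁻¹ * φ (l * t)) := by
          apply mul_le_mul_of_nonneg_left h
          positivity
      _ = φ (l * t) := by field_simp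
  -- assemble
  refine ⟨min ε₀ ε₁, lt_min hε₀pos hε₁pos, min C₂⁻¹ CU, max C₂⁻¹ CU,
    lt_min (inv_pos.mpr hC₂pos) hCUpos, min_le_max, ?_⟩
  intro t l ht hl
  have hlpos : 0 < l := lt_of_lt_of_le one_pos hl
  constructor
  · have h1 : l ^ (a + min ε₀ ε₁) ≤ l ^ (a + ε₁) :=
      Real.rpow_le_rpow_of_exponent_le hl (add_le_add_right (min_le_right ε₀ ε₁) a)
    have h2 : min C₂⁻¹ CU ≤ C₂⁻¹ := min_le_left _ _
    have hp : (0:ℝ) < l ^ (a + min ε₀ ε₁) := Real.rpow_pos_of_pos hlpos _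
    calc min C₂⁻¹ CU * l ^ (a + min ε₀ ε₁)
        ≤ C₂⁻¹ * l ^ (a + ε₁) :=
          mul_le_mul h2 h1 hp.le (inv_pos.mpr hC₂pos).le
      _ ≤ φ (l * t) / φ t := hlower t l ht hl
  · have h1 : l ^ (b - ε₀) ≤ l ^ (b - min ε₀ ε₁) :=
      Real.rpow_le_rpow_of_exponent_le hl (sub_le_sub_left (min_le_left ε₀ ε₁) b)
    have h2 : CU ≤ max C₂⁻¹ CU := le_max_right _ _
    have hp : (0:ℝ) < l ^ (b - ε₀) := Real.rpow_pos_of_pos hlpos _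
    calc φ (l * t) / φ t ≤ CU * l ^ (b - ε₀) := hupper t l ht hl
      _ ≤ max C₂⁻¹ CU * l ^ (b - min ε₀ ε₁) :=
          mul_le_mul h2 h1 hp.le
            (le_trans (inv_pos.mpr hC₂pos).le (le_max_left _ _))
end

section
/- Let φ ∈ I_o(0,M), q ∈ [1,∞), ε > 0 as in the scaling estimate λ^ε ≲ φ(λt)/φ(t) for λ ≥ 1, and let ψ be a Schwartz function on ℝ^d. Then for every y ∈ ℝ^d \ {0}, ∫_0^1 φ(t^{-1})^q |ψ_{1/t}(y)| dt/t ≤ C φ(|y|^{-1})^q |y|^{-d}, where ψ_{1/t}(y) = t^{-d} ψ(y/t) and C depends on d, q, ψ, φ but not on y. -/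
open MeasureTheory

set_option maxHeartbeats 1000000 in
/-- For `φ ∈ I_o(0,M)`, `q ≥ 1`, `ε > 0` with `c0·λ^ε ≤ φ(λt)/φ(t)` for `λ ≥ 1`, and a
Schwartz function `ψ` on `ℝ^d`: for all `y ≠ 0`,
`∫_0^1 φ(t⁻¹)^q |ψ_(1/t)(y)| dt/t ≤ C φ(|y|⁻¹)^q |y|^(−d)` with `C` independent of `y`. -/
theorem integral_scaling_kernel_bound (d : ℕ) (M q ε c0 : ℝ)
    (hM : 0 < M) (hq : 1 ≤ q) (hε : 0 < ε) (hc0 : 0 < c0)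
    (φ : ℝ → ℝ) (hφ : MemIo 0 M φ)
    (hscale : ∀ l t : ℝ, 1 ≤ l → 0 < t → c0 * l ^ ε ≤ φ (l * t) / φ t)
    (ψ : SchwartzMap (EuclideanSpace ℝ (Fin d)) ℝ) :
    ∃ C : ℝ, 0 < C ∧ ∀ y : EuclideanSpace ℝ (Fin d), y ≠ 0 →
      (∫ t in Set.Ioo (0 : ℝ) 1, φ t⁻¹ ^ q * |t ^ (-(d : ℝ)) * ψ (t⁻¹ • y)| / t)
        ≤ C * φ (‖y‖⁻¹) ^ q * ‖y‖ ^ (-(d : ℝ)) := by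
  obtain ⟨hφpos, -, hbig⟩ := hφ
  obtain ⟨R, hR1, hR⟩ := hbig 1 one_pos
  have hR0 : 0 < R := lt_of_lt_of_le one_pos hR1
  have hq0 : 0 < q := lt_of_lt_of_le one_pos hq
  have hc0' : 0 < c0⁻¹ := inv_pos.mpr hc0
  have hRM : 0 < R ^ M := Real.rpow_pos_of_pos hR0 M
  -- global upper bound for dilations `l ≥ 1`
  set C₁ : ℝ := 1 + c0⁻¹ * R ^ M with hC₁def
  have hC₁pos : 0 < C₁ := by rw [hC₁def]; positivity
  have hC₁one : 1 ≤ C₁ := by rw [hC₁def]; nlinarith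
  have hA : ∀ l t : ℝ, 1 ≤ l → 0 < t → φ (l * t) ≤ C₁ * l ^ M * φ t := by
    intro l t hl ht
    have hl0 : 0 < l := lt_of_lt_of_le one_pos hl
    have hlM : (1 : ℝ) ≤ l ^ M := Real.one_le_rpow hl hM.le
    have hlM0 : (0 : ℝ) ≤ l ^ M := by positivity
    have hφt : 0 < φ t := hφpos t ht
    rcases le_or_gt R l with hRl | hlR
    · have h := hR l t hRl ht
      rw [div_le_iff₀ hφt, one_mul] at h
      calc φ (l * t) ≤ l ^ M * φ t := h
        _ = 1 * (l ^ M * φ t) := by ring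
        _ ≤ C₁ * (l ^ M * φ t) :=
            mul_le_mul_of_nonneg_right hC₁one (by positivity)
        _ = C₁ * l ^ M * φ t := by ring
    · -- 1 ≤ l < R
      have hlt : 0 < l * t := by positivity
      have h1 := hscale (R / l) (l * t) (by rw [le_div_iff₀ hl0]; linarith) hlt
      have hRl : R / l * (l * t) = R * t := by field_simp
      rw [hRl] at h1
      have hRle : (1 : ℝ) ≤ (R / l) ^ ε :=
        Real.one_le_rpow (by rw [le_div_iff₀ hl0]; linarith) hε.le
      have hφlt : 0 < φ (l * t) := hφpos _ hlt
      have hφRt : 0 < φ (R * t) := hφpos _ (by positivity)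
      have h2 : c0 * φ (l * t) ≤ φ (R * t) := by
        have hc : c0 ≤ φ (R * t) / φ (l * t) := by
          have hp : (0 : ℝ) < (R / l) ^ ε := by positivity
          nlinarith
        rw [le_div_iff₀ hφlt] at hc
        linarith
      have h3 : φ (R * t) ≤ R ^ M * φ t := by
        have h := hR R t le_rfl ht
        rwa [div_le_iff₀ hφt, one_mul] at h
      have h4 : c0 * φ (l * t) ≤ R ^ M * φ t := h2.trans h3
      have key : φ (l * t) ≤ C₁ * φ t := by
        calc φ (l * t) = c0⁻¹ * (c0 * φ (l * t)) := by field_simp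
          _ ≤ c0⁻¹ * (R ^ M * φ t) := mul_le_mul_of_nonneg_left h4 hc0'.le
          _ = c0⁻¹ * R ^ M * φ t := by ring
          _ ≤ C₁ * φ t := by
              refine mul_le_mul_of_nonneg_right ?_ hφt.le
              rw [hC₁def]; linarith
      calc φ (l * t) ≤ C₁ * φ t := key
        _ = C₁ * 1 * φ t := by ring
        _ ≤ C₁ * l ^ M * φ t :=
            mul_le_mul_of_nonneg_right
              (mul_le_mul_of_nonneg_left hlM hC₁pos.le) hφt.le
  -- scaling lower bound, rearranged
  have hB : ∀ l t : ℝ, 1 ≤ l → 0 < t → φ t ≤ c0⁻¹ * ((l ^ ε)⁻¹ * φ (l * t)) := by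
    intro l t hl ht
    have hl0 : 0 < l := lt_of_lt_of_le one_pos hl
    have hφt : 0 < φ t := hφpos t ht
    have hφlt : 0 < φ (l * t) := hφpos _ (by positivity)
    have hle : 0 < l ^ ε := Real.rpow_pos_of_pos hl0 ε
    have h := hscale l t hl ht
    rw [le_div_iff₀ hφt] at h
    rw [← mul_assoc, ← mul_inv, ← div_eq_inv_mul, le_div_iff₀ (by positivity)]
    nlinarith
  -- Schwartz bounds
  obtain ⟨C0, hC0pos, hC0⟩ := ψ.decay 0 0
  set N : ℕ := ⌈M * q + d⌉₊ + 1 with hNdef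
  have hN : M * q + (d : ℝ) < N := by
    have h := Nat.le_ceil (M * q + (d : ℝ))
    have h2 : (⌈M * q + (d : ℝ)⌉₊ : ℝ) < N := by
      rw [hNdef]; push_cast; linarith
    linarith
  obtain ⟨CN, hCNpos, hCN⟩ := ψ.decay N 0
  set α : ℝ := (N : ℝ) - M * q with hαdef
  have hαd : (d : ℝ) < α := by rw [hαdef]; linarith
  have hd0 : (0 : ℝ) ≤ d := Nat.cast_nonneg d
  have hεq : 0 < ε * q := by positivity
  have hεqd : 0 < ε * q + d := by linarith
  set B₁ : ℝ := C₁ ^ q * CN with hB₁def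
  set B₂ : ℝ := c0⁻¹ ^ q * C0 with hB₂def
  have hB₁pos : 0 < B₁ := by
    rw [hB₁def]; exact mul_pos (Real.rpow_pos_of_pos hC₁pos q) hCNpos
  have hB₂pos : 0 < B₂ := by
    rw [hB₂def]; exact mul_pos (Real.rpow_pos_of_pos hc0' q) hC0pos
  set B : ℝ := B₁ + B₂ with hBdef
  have hBpos : 0 < B := by rw [hBdef]; linarith
  have hCpos : 0 < B * ((α - d)⁻¹ + (ε * q + d)⁻¹) := by
    have h1 : 0 < (α - (d : ℝ))⁻¹ := inv_pos.mpr (by linarith)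
    have h2 : 0 < (ε * q + (d : ℝ))⁻¹ := inv_pos.mpr hεqd
    exact mul_pos hBpos (by linarith)
  refine ⟨B * ((α - d)⁻¹ + (ε * q + d)⁻¹), hCpos, ?_⟩
  intro y hy
  set r : ℝ := ‖y‖ with hrdef
  have hr : 0 < r := by rw [hrdef]; exact norm_pos_iff.mpr hy
  have hΦpos : 0 < φ r⁻¹ ^ q :=
    Real.rpow_pos_of_pos (hφpos _ (by positivity)) q
  -- the majorant
  set g : ℝ → ℝ := fun t =>
    B * φ r⁻¹ ^ q *
      ((if t ≤ r then (t / r) ^ α else (t / r) ^ (-(ε * q))) * t ^ (-(d : ℝ) - 1))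
    with hgdef
  have hsplit : Set.Ioi (0 : ℝ) = Set.Ioc 0 r ∪ Set.Ioi r :=
    (Set.Ioc_union_Ioi_eq_Ioi hr.le).symm
  have hg1eq : ∀ t ∈ Set.Ioc (0 : ℝ) r,
      g t = B * φ r⁻¹ ^ q * r ^ (-α) * t ^ (α - (d : ℝ) - 1) := by
    intro t ht
    obtain ⟨ht0, htr⟩ := ht
    rw [hgdef]
    simp only [if_pos htr]
    rw [Real.div_rpow ht0.le hr.le, div_eq_mul_inv (t ^ α), ← Real.rpow_neg hr.le]
    rw [show α - (d : ℝ) - 1 = α + (-(d : ℝ) - 1) by ring, Real.rpow_add ht0]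
    ring
  have hg2eq : ∀ t ∈ Set.Ioi r,
      g t = B * φ r⁻¹ ^ q * r ^ (ε * q) * t ^ (-(ε * q) - (d : ℝ) - 1) := by
    intro t ht
    have htr : r < t := ht
    have ht0 : 0 < t := hr.trans htr
    rw [hgdef]
    simp only [if_neg (not_le.mpr htr)]
    rw [Real.div_rpow ht0.le hr.le, div_eq_mul_inv (t ^ (-(ε * q))),
      ← Real.rpow_neg hr.le, neg_neg]
    rw [show -(ε * q) - (d : ℝ) - 1 = -(ε * q) + (-(d : ℝ) - 1) by ring,
      Real.rpow_add ht0]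
    ring
  have hint1 : IntegrableOn (fun t => t ^ (α - (d : ℝ) - 1)) (Set.Ioc (0 : ℝ) r) := by
    rw [← intervalIntegrable_iff_integrableOn_Ioc_of_le hr.le]
    exact _root_.intervalIntegral.intervalIntegrable_rpow' (by linarith)
  have hint2 : IntegrableOn (fun t => t ^ (-(ε * q) - (d : ℝ) - 1)) (Set.Ioi r) :=
    integrableOn_Ioi_rpow_of_lt (by linarith) hr
  have hg1 : IntegrableOn g (Set.Ioc (0 : ℝ) r) :=
    MeasureTheory.IntegrableOn.congr_fun
      (hint1.const_mul (B * φ r⁻¹ ^ q * r ^ (-α)))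
      (fun t ht => (hg1eq t ht).symm) measurableSet_Ioc
  have hg2 : IntegrableOn g (Set.Ioi r) :=
    MeasureTheory.IntegrableOn.congr_fun
      (hint2.const_mul (B * φ r⁻¹ ^ q * r ^ (ε * q)))
      (fun t ht => (hg2eq t ht).symm) measurableSet_Ioi
  have hgint : IntegrableOn g (Set.Ioi (0 : ℝ)) := by
    rw [hsplit]; exact hg1.union hg2
  -- raw power integrals
  have I1 : (∫ t in Set.Ioc (0 : ℝ) r, t ^ (α - (d : ℝ) - 1))
      = r ^ (α - (d : ℝ)) / (α - (d : ℝ)) := by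
    rw [← _root_.intervalIntegral.integral_of_le hr.le,
      integral_rpow (Or.inl (by linarith))]
    rw [show α - (d : ℝ) - 1 + 1 = α - (d : ℝ) by ring,
      Real.zero_rpow (by linarith : α - (d : ℝ) ≠ 0), sub_zero]
  have I2 : (∫ t in Set.Ioi r, t ^ (-(ε * q) - (d : ℝ) - 1))
      = r ^ (-(ε * q + (d : ℝ))) / (ε * q + (d : ℝ)) := by
    rw [integral_Ioi_rpow_of_lt (by linarith) hr,
      show -(ε * q) - (d : ℝ) - 1 + 1 = -(ε * q + (d : ℝ)) by ring,
      neg_div_neg_eq]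
  -- value of ∫ g over (0, ∞)
  have hval : (∫ t in Set.Ioi (0 : ℝ), g t)
      = B * ((α - d)⁻¹ + (ε * q + d)⁻¹) * φ r⁻¹ ^ q * r ^ (-(d : ℝ)) := by
    rw [hsplit, setIntegral_union (Set.Ioc_disjoint_Ioi le_rfl) measurableSet_Ioi hg1 hg2]
    rw [setIntegral_congr_fun measurableSet_Ioc hg1eq,
      setIntegral_congr_fun measurableSet_Ioi hg2eq]
    rw [integral_const_mul, integral_const_mul, I1, I2]
    have hr1 : r ^ (-α) * r ^ (α - (d : ℝ)) = r ^ (-(d : ℝ)) := by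
      rw [← Real.rpow_add hr]; congr 1; ring
    have hr2 : r ^ (ε * q) * r ^ (-(ε * q + (d : ℝ))) = r ^ (-(d : ℝ)) := by
      rw [← Real.rpow_add hr]; congr 1; ring
    calc B * φ r⁻¹ ^ q * r ^ (-α) * (r ^ (α - (d : ℝ)) / (α - (d : ℝ)))
          + B * φ r⁻¹ ^ q * r ^ (ε * q) * (r ^ (-(ε * q + (d : ℝ))) / (ε * q + (d : ℝ)))
        = B * φ r⁻¹ ^ q * (α - (d : ℝ))⁻¹ * (r ^ (-α) * r ^ (α - (d : ℝ)))
          + B * φ r⁻¹ ^ q * (ε * q + (d : ℝ))⁻¹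
            * (r ^ (ε * q) * r ^ (-(ε * q + (d : ℝ)))) := by ring
      _ = B * φ r⁻¹ ^ q * (α - (d : ℝ))⁻¹ * r ^ (-(d : ℝ))
          + B * φ r⁻¹ ^ q * (ε * q + (d : ℝ))⁻¹ * r ^ (-(d : ℝ)) := by rw [hr1, hr2]
      _ = B * ((α - d)⁻¹ + (ε * q + d)⁻¹) * φ r⁻¹ ^ q * r ^ (-(d : ℝ)) := by ring
  -- pointwise bound on (0,1)
  have hptwise : ∀ t ∈ Set.Ioo (0 : ℝ) 1,
      φ t⁻¹ ^ q * |t ^ (-(d : ℝ)) * ψ (t⁻¹ • y)| / t ≤ g t := by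
    intro t ht
    obtain ⟨ht0, ht1⟩ := ht
    have htinv : 0 < t⁻¹ := inv_pos.mpr ht0
    have hφt : 0 < φ t⁻¹ := hφpos _ htinv
    have habs : |t ^ (-(d : ℝ)) * ψ (t⁻¹ • y)| = t ^ (-(d : ℝ)) * |ψ (t⁻¹ • y)| := by
      rw [abs_mul, abs_of_nonneg (Real.rpow_nonneg ht0.le _)]
    have hnorm : ‖t⁻¹ • y‖ = r / t := by
      rw [norm_smul, Real.norm_eq_abs, abs_inv, abs_of_pos ht0, ← hrdef]
      ring
    have he2 : t ^ (-(d : ℝ)) / t = t ^ (-(d : ℝ) - 1) := by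
      rw [show -(d : ℝ) - 1 = -(d : ℝ) + (-1) by ring, Real.rpow_add ht0,
        Real.rpow_neg_one, div_eq_mul_inv]
    have hden : (0 : ℝ) ≤ t ^ (-(d : ℝ)) / t := by positivity
    rcases le_or_gt t r with htr | hrt
    · -- small t regime
      have hl : (1 : ℝ) ≤ r / t := (one_le_div ht0).mpr htr
      have hrt0 : 0 < r / t := by positivity
      have htr0 : 0 < t / r := by positivity
      have hφb : φ t⁻¹ ≤ C₁ * (r / t) ^ M * φ r⁻¹ := by
        have h := hA (r / t) r⁻¹ hl (by positivity)
        rwa [show r / t * r⁻¹ = t⁻¹ by field_simp] at h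
      have hφbq : φ t⁻¹ ^ q ≤ C₁ ^ q * (r / t) ^ (M * q) * φ r⁻¹ ^ q := by
        have h := Real.rpow_le_rpow hφt.le hφb hq0.le
        rwa [Real.mul_rpow (by positivity) (hφpos _ (by positivity)).le,
          Real.mul_rpow hC₁pos.le (by positivity),
          ← Real.rpow_mul hrt0.le] at h
      have hψb : |ψ (t⁻¹ • y)| ≤ CN * (t / r) ^ (N : ℝ) := by
        have h := hCN (t⁻¹ • y)
        rw [norm_iteratedFDeriv_zero, hnorm, Real.norm_eq_abs] at h
        have hpow : (0 : ℝ) < (r / t) ^ N := by positivity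
        have key : |ψ (t⁻¹ • y)| ≤ CN / (r / t) ^ N := by
          rw [le_div_iff₀ hpow]; linarith
        calc |ψ (t⁻¹ • y)| ≤ CN / (r / t) ^ N := key
          _ = CN * (t / r) ^ (N : ℝ) := by
              rw [Real.rpow_natCast, div_eq_mul_inv CN, ← inv_pow, inv_div]
      have hgt : g t = B * φ r⁻¹ ^ q * ((t / r) ^ α * t ^ (-(d : ℝ) - 1)) := by
        rw [hgdef]; simp only [if_pos htr]
      have hfactor : (r / t) ^ (M * q) * (t / r) ^ (N : ℝ) = (t / r) ^ α := by
        rw [show r / t = (t / r)⁻¹ by rw [inv_div],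
          Real.inv_rpow htr0.le, ← Real.rpow_neg htr0.le, ← Real.rpow_add htr0]
        congr 1
        rw [hαdef]; ring
      have hX : (0 : ℝ) ≤ (t / r) ^ α * t ^ (-(d : ℝ) - 1) := by positivity
      calc φ t⁻¹ ^ q * |t ^ (-(d : ℝ)) * ψ (t⁻¹ • y)| / t
          = φ t⁻¹ ^ q * |ψ (t⁻¹ • y)| * (t ^ (-(d : ℝ)) / t) := by rw [habs]; ring
        _ ≤ (C₁ ^ q * (r / t) ^ (M * q) * φ r⁻¹ ^ q) * (CN * (t / r) ^ (N : ℝ))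
              * (t ^ (-(d : ℝ)) / t) := by
            refine mul_le_mul ?_ le_rfl hden ?_
            · exact mul_le_mul hφbq hψb (abs_nonneg _) (by positivity)
            · positivity
        _ = B₁ * φ r⁻¹ ^ q * ((r / t) ^ (M * q) * (t / r) ^ (N : ℝ)
              * (t ^ (-(d : ℝ)) / t)) := by
            rw [hB₁def]; ring
        _ = B₁ * φ r⁻¹ ^ q * ((t / r) ^ α * t ^ (-(d : ℝ) - 1)) := by
            rw [mul_assoc ((r / t) ^ (M * q)) _ _] at *
            rw [show (r / t) ^ (M * q) * ((t / r) ^ (N : ℝ) * (t ^ (-(d : ℝ)) / t))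
              = (r / t) ^ (M * q) * (t / r) ^ (N : ℝ) * (t ^ (-(d : ℝ)) / t) by ring,
              hfactor, he2]
        _ ≤ g t := by
            rw [hgt]
            exact mul_le_mul_of_nonneg_right
              (mul_le_mul_of_nonneg_right (by rw [hBdef]; linarith) hΦpos.le) hX
    · -- large t regime
      have hl : (1 : ℝ) ≤ t / r := le_of_lt ((one_lt_div hr).mpr hrt)
      have htr0 : 0 < t / r := by positivity
      have hφb : φ t⁻¹ ≤ c0⁻¹ * (((t / r) ^ ε)⁻¹ * φ r⁻¹) := by
        have h := hB (t / r) t⁻¹ hl htinv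
        rwa [show t / r * t⁻¹ = r⁻¹ by field_simp] at h
      have hφb' : φ t⁻¹ ≤ c0⁻¹ * (t / r) ^ (-ε) * φ r⁻¹ := by
        rw [Real.rpow_neg htr0.le, mul_assoc]
        exact hφb
      have hφbq : φ t⁻¹ ^ q ≤ c0⁻¹ ^ q * (t / r) ^ (-(ε * q)) * φ r⁻¹ ^ q := by
        have h := Real.rpow_le_rpow hφt.le hφb' hq0.le
        rwa [Real.mul_rpow (by positivity) (hφpos _ (by positivity)).le,
          Real.mul_rpow (by positivity) (by positivity),
          ← Real.rpow_mul htr0.le,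
          show -ε * q = -(ε * q) by ring] at h
      have hψb : |ψ (t⁻¹ • y)| ≤ C0 := by
        have h := hC0 (t⁻¹ • y)
        rwa [norm_iteratedFDeriv_zero, pow_zero, one_mul, Real.norm_eq_abs] at h
      have hgt : g t = B * φ r⁻¹ ^ q * ((t / r) ^ (-(ε * q)) * t ^ (-(d : ℝ) - 1)) := by
        rw [hgdef]; simp only [if_neg (not_le.mpr hrt)]
      have hX : (0 : ℝ) ≤ (t / r) ^ (-(ε * q)) * t ^ (-(d : ℝ) - 1) := by positivity
      calc φ t⁻¹ ^ q * |t ^ (-(d : ℝ)) * ψ (t⁻¹ • y)| / t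
          = φ t⁻¹ ^ q * |ψ (t⁻¹ • y)| * (t ^ (-(d : ℝ)) / t) := by rw [habs]; ring
        _ ≤ (c0⁻¹ ^ q * (t / r) ^ (-(ε * q)) * φ r⁻¹ ^ q) * C0
              * (t ^ (-(d : ℝ)) / t) := by
            refine mul_le_mul ?_ le_rfl hden ?_
            · exact mul_le_mul hφbq hψb (abs_nonneg _) (by positivity)
            · positivity
        _ = B₂ * φ r⁻¹ ^ q * ((t / r) ^ (-(ε * q)) * (t ^ (-(d : ℝ)) / t)) := by
            rw [hB₂def]; ring
        _ = B₂ * φ r⁻¹ ^ q * ((t / r) ^ (-(ε * q)) * t ^ (-(d : ℝ) - 1)) := by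
            rw [he2]
        _ ≤ g t := by
            rw [hgt]
            exact mul_le_mul_of_nonneg_right
              (mul_le_mul_of_nonneg_right (by rw [hBdef]; linarith) hΦpos.le) hX
  -- nonnegativity of the integrand on (0,1)
  have hfnonneg : ∀ t ∈ Set.Ioo (0 : ℝ) 1,
      0 ≤ φ t⁻¹ ^ q * |t ^ (-(d : ℝ)) * ψ (t⁻¹ • y)| / t := by
    intro t ht
    have ht0 : 0 < t := ht.1
    have hφt : 0 < φ t⁻¹ := hφpos _ (inv_pos.mpr ht0)
    positivity
  -- nonnegativity of g on (0,∞)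
  have hgnonneg : ∀ t ∈ Set.Ioi (0 : ℝ), 0 ≤ g t := by
    intro t ht
    have ht0 : 0 < t := ht
    rw [hgdef]
    have h1 : (0 : ℝ) ≤ if t ≤ r then (t / r) ^ α else (t / r) ^ (-(ε * q)) := by
      split <;> positivity
    positivity
  -- chain of inequalities
  calc (∫ t in Set.Ioo (0 : ℝ) 1, φ t⁻¹ ^ q * |t ^ (-(d : ℝ)) * ψ (t⁻¹ • y)| / t)
      ≤ ∫ t in Set.Ioo (0 : ℝ) 1, g t := by
        apply integral_mono_of_nonneg
        · exact (ae_restrict_iff' measurableSet_Ioo).mpr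
            (Filter.Eventually.of_forall hfnonneg)
        · exact hgint.mono_set Set.Ioo_subset_Ioi_self
        · exact (ae_restrict_iff' measurableSet_Ioo).mpr
            (Filter.Eventually.of_forall hptwise)
    _ ≤ ∫ t in Set.Ioi (0 : ℝ), g t := by
        apply setIntegral_mono_set hgint
        · exact (ae_restrict_iff' measurableSet_Ioi).mpr
            (Filter.Eventually.of_forall hgnonneg)
        · exact HasSubset.Subset.eventuallyLE Set.Ioo_subset_Ioi_self
    _ = B * ((α - d)⁻¹ + (ε * q + d)⁻¹) * φ r⁻¹ ^ q * r ^ (-(d : ℝ)) := hval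
end
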